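/- arXiv:1508.00522 — 7 statements merged into one kernel-verified Lean document; each statement's English description precedes it below -/
import Mathlib

section
/- Let M : H(n) → ℝ^m be a real-linear map and let 1 ≤ r. Then M is r-complete if and only if every nonzero Hermitian matrix X in the kernel of M has at least r+1 positive eigenvalues (counted with multiplicity). -/
open Matrix
open scoped ComplexOrder

noncomputable section

def rComplete {n : ℕ} {ι : Type*} [Fintype ι]
    (M : Matrix (Fin n) (Fin n) ℂ →ₗ[ℝ] EuclideanSpace ℝ ι) (r : ℕ) : Prop :=
  ∀ X X' : Matrix (Fin n) (Fin n) ℂ, X.PosSemidef → X.rank ≤ r → X'.PosSemidef →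
    X ≠ X' → M X ≠ M X'

/-! If a nonzero Hermitian `X` in the kernel of `M` has at most `r` positive eigenvalues, its
positive and negative parts `X⁺`, `X⁻` are positive semidefinite with `rank X⁺ ≤ r` and
`M X⁺ = M X⁻`, so `M` is not `r`-complete. Conversely, let `M X = M X'` with `X`, `X'` positive
semidefinite and `rank X ≤ r`, and let `B` have as columns the eigenvectors of `D = X - X'` with
positive eigenvalues. Then `Bᴴ X B = Bᴴ D B + Bᴴ X' B` is positive definite, so `D` has at most
`rank X ≤ r` positive eigenvalues; hence `D = 0`. -/

namespace Matrix.IsHermitian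

variable {ι 𝕜 : Type*} [Fintype ι] [DecidableEq ι] [RCLike 𝕜] {A : Matrix ι ι 𝕜}

lemma cfc_sub (hA : A.IsHermitian) (f g : ℝ → ℝ) : hA.cfc f - hA.cfc g = hA.cfc (f - g) := by
  simp only [IsHermitian.cfc, ← map_sub, diagonal_sub]
  congr 2
  ext i
  simp

lemma cfc_id (hA : A.IsHermitian) : hA.cfc id = A :=
  hA.spectral_theorem.symm

lemma posSemidef_cfc (hA : A.IsHermitian) {f : ℝ → ℝ} (hf : ∀ i, 0 ≤ f (hA.eigenvalues i)) :
    (hA.cfc f).PosSemidef := by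
  rw [IsHermitian.cfc, Unitary.conjStarAlgAut_apply, star_eq_conjTranspose]
  exact (PosSemidef.diagonal fun i => RCLike.ofReal_nonneg.2 (hf i)).mul_mul_conjTranspose_same _

lemma rank_cfc (hA : A.IsHermitian) (f : ℝ → ℝ) :
    (hA.cfc f).rank = Fintype.card {i // f (hA.eigenvalues i) ≠ 0} := by
  rw [IsHermitian.cfc, Unitary.conjStarAlgAut_apply, ← Unitary.coe_star]
  simp [-isUnit_iff_ne_zero, -Unitary.coe_star, rank_diagonal]

lemma eq_cfc_posPart_sub_cfc_negPart (hA : A.IsHermitian) :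
    A = hA.cfc (·⁺) - hA.cfc (·⁻) := by
  rw [cfc_sub]
  convert hA.cfc_id.symm
  ext x
  exact posPart_sub_negPart x

lemma conjTranspose_eigenvectorUnitary_submatrix_mul_mul (hA : A.IsHermitian) {κ : Type*}
    [Fintype κ] [DecidableEq κ] {e : κ → ι} (he : Function.Injective e) :
    ((hA.eigenvectorUnitary : Matrix ι ι 𝕜).submatrix id e)ᴴ * A *
        (hA.eigenvectorUnitary : Matrix ι ι 𝕜).submatrix id e =
      diagonal fun k => (hA.eigenvalues (e k) : 𝕜) := by
  have hdiag := hA.conjStarAlgAut_star_eigenvectorUnitary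
  rw [Unitary.conjStarAlgAut_star_apply] at hdiag
  calc _ = (star (hA.eigenvectorUnitary : Matrix ι ι 𝕜) * A * hA.eigenvectorUnitary).submatrix
        e e := by
        ext k l
        simp [mul_apply, conjTranspose_apply]
    _ = _ := by rw [hdiag, submatrix_diagonal _ _ he]; rfl

end Matrix.IsHermitian

lemma card_pos_eigenvalues_sub_le_rank {ι 𝕜 : Type*} [Fintype ι] [DecidableEq ι] [RCLike 𝕜]
    {X Y : Matrix ι ι 𝕜} (hY : Y.PosSemidef) (hXY : (X - Y).IsHermitian) :
    Fintype.card {i // 0 < hXY.eigenvalues i} ≤ X.rank := by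
  set B := (hXY.eigenvectorUnitary : Matrix ι ι 𝕜).submatrix id
    (Subtype.val : {i // 0 < hXY.eigenvalues i} → ι)
  have hBDB : (Bᴴ * (X - Y) * B).PosDef := by
    rw [hXY.conjTranspose_eigenvectorUnitary_submatrix_mul_mul Subtype.val_injective]
    exact PosDef.diagonal fun s => RCLike.ofReal_pos.2 s.2
  have hBXB : (Bᴴ * X * B).PosDef := by
    rw [show Bᴴ * X * B = Bᴴ * (X - Y) * B + Bᴴ * Y * B by
      rw [Matrix.mul_sub, Matrix.sub_mul, sub_add_cancel]]
    exact hBDB.add_posSemidef (hY.conjTranspose_mul_mul_same B)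
  calc Fintype.card {i // 0 < hXY.eigenvalues i} = (Bᴴ * X * B).rank :=
        (rank_of_isUnit _ hBXB.isUnit).symm
    _ ≤ X.rank := (rank_mul_le_left _ _).trans (rank_mul_le_right _ _)

section rComplete

variable {n r : ℕ} {ι : Type*} [Fintype ι]
  {M : Matrix (Fin n) (Fin n) ℂ →ₗ[ℝ] EuclideanSpace ℝ ι}

lemma lt_card_pos_eigenvalues_of_rComplete (hM : rComplete M r) {X : Matrix (Fin n) (Fin n) ℂ}
    (hX : X.IsHermitian) (hMX : M X = 0) (hX0 : X ≠ 0) :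
    r < Fintype.card {i // 0 < hX.eigenvalues i} := by
  by_contra! hcard
  have hsplit := hX.eq_cfc_posPart_sub_cfc_negPart
  refine hM (hX.cfc (·⁺)) (hX.cfc (·⁻)) (hX.posSemidef_cfc fun _ => posPart_nonneg _) ?_
    (hX.posSemidef_cfc fun _ => negPart_nonneg _) (fun h => hX0 ?_) ?_
  · simpa only [hX.rank_cfc, ne_eq, posPart_eq_zero, not_le] using hcard
  · rw [hsplit, h, sub_self]
  · rw [← sub_eq_zero, ← map_sub, ← hsplit, hMX]

lemma rComplete_of_lt_card_pos_eigenvalues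
    (h : ∀ (X : Matrix (Fin n) (Fin n) ℂ) (hX : X.IsHermitian), M X = 0 → X ≠ 0 →
      r < Fintype.card {i // 0 < hX.eigenvalues i}) :
    rComplete M r := by
  intro X X' hX hrank hX' hne hMX
  have hD : (X - X').IsHermitian := hX.isHermitian.sub hX'.isHermitian
  have := h (X - X') hD (by rw [map_sub, hMX, sub_self]) (sub_ne_zero.2 hne)
  have := card_pos_eigenvalues_sub_le_rank hX' hD
  omega

end rComplete

theorem stmt1_general {n m r : ℕ}
    (M : Matrix (Fin n) (Fin n) ℂ →ₗ[ℝ] EuclideanSpace ℝ (Fin m)) :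
    rComplete M r ↔
      ∀ (X : Matrix (Fin n) (Fin n) ℂ) (hX : X.IsHermitian), M X = 0 → X ≠ 0 →
        r + 1 ≤ (Finset.univ.filter fun i => 0 < hX.eigenvalues i).card := by
  simp only [← Fintype.card_subtype, Nat.add_one_le_iff]
  exact ⟨fun hM X hX => lt_card_pos_eigenvalues_of_rComplete hM hX,
    rComplete_of_lt_card_pos_eigenvalues⟩

/-- `M` is `r`-complete iff every nonzero Hermitian matrix in its kernel has
at least `r+1` positive eigenvalues (counted with multiplicity). -/
theorem stmt1 {n m r : ℕ} (hr : 1 ≤ r)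
    (M : Matrix (Fin n) (Fin n) ℂ →ₗ[ℝ] EuclideanSpace ℝ (Fin m)) :
    rComplete M r ↔
      ∀ (X : Matrix (Fin n) (Fin n) ℂ) (hX : X.IsHermitian), M X = 0 → X ≠ 0 →
        r + 1 ≤ (Finset.univ.filter fun i => 0 < hX.eigenvalues i).card :=
  stmt1_general M
end
end

section
/- Fix n ≥ 2 and nonzero real numbers x_1 < x_2 < … < x_{2n−3}. Let G be the (5n−6)-tuple of Hermitian matrices consisting of e_0e_0*, …, e_{n−1}e_{n−1}* together with, for each k ∈ {1,…,2n−3}, the normalized rank-one matrices v_k v_k*/‖v_k v_k*‖₂ and v̄_k v̄_k*/‖v̄_k v̄_k*‖₂. Then the measurement M_G : H(n) → ℝ^{5n−6}, X ↦ (tr(G_1 X),…,tr(G_{5n−6} X)), is 1-complete. -/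
open Matrix
open scoped ComplexOrder

noncomputable section

def frobNorm {n : ℕ} (X : Matrix (Fin n) (Fin n) ℂ) : ℝ :=
  Real.sqrt (∑ i, ∑ j, Complex.normSq (X i j))

noncomputable def measOf {n : ℕ} {ι : Type*} [Fintype ι]
    (G : ι → Matrix (Fin n) (Fin n) ℂ) :
    Matrix (Fin n) (Fin n) ℂ →ₗ[ℝ] EuclideanSpace ℝ ι where
  toFun X := WithLp.toLp 2 (fun i => ((G i * X).trace).re)
  map_add' X Y := by
    ext i
    simp [Matrix.mul_add]
  map_smul' r X := by
    ext i
    simp [Matrix.mul_smul, Matrix.trace_smul, Complex.real_smul]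

/-- The vector `v = (1, x e^{iπ/(2n)}, x² e^{2iπ/(2n)}, …, x^{n−1} e^{(n−1)iπ/(2n)})ᵗ ∈ ℂⁿ`. -/
noncomputable def pvec (n : ℕ) (x : ℝ) : Fin n → ℂ := fun j =>
  (x : ℂ) ^ (j : ℕ) *
    Complex.exp (((j : ℕ) : ℂ) * (Real.pi : ℂ) * Complex.I / (2 * (n : ℂ)))

/-! Let `D = X' - X`. The measurements `e_j e_j*` kill the diagonal of `D`. With
`ω = e^{iπ/(2n)}` one has `v_k* D v_k = ∑_{j,l} ω̄^j ω^l D_{jl} x_k^{j+l}`; as the diagonal of `D`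
vanishes, this is a polynomial in `x_k` of degree at most `2n - 3` vanishing at `0`, so its
vanishing at the `2n - 3` nonzero points `x_k` kills every weighted antidiagonal sum
`∑_{j+l=s} ω̄^j ω^l D_{jl}`; the `v̄_k` do the same with `ω` and `ω̄` exchanged.

Since `X` has rank at most one, every plane contains a nonzero vector of `ker X`, on which the form
of `D` is that of `X' ≥ 0`: `D` is negative definite on no plane. Now descend through the
antidiagonals. On the highest one carrying a nonzero entry, two nonzero entries `D_{ab}`, `D_{cd}`
above the diagonal would make `D` negative definite on the span of `e_a + τ e_b` and `e_c + χ e_d`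
for suitable `τ`, `χ`. A single one, `D_{ab}` with `a < b`, is excluded by the two weighted sums,
which read `λ z + μ z̄ = μ z + λ z̄ = 0` for `z = D_{ab}` and `λ² - μ² ≠ 0` because
`ω^{4(b-a)} ≠ 1`. -/

section QuadraticForm

variable {ι : Type*} [Fintype ι]

/-- Equivalently, the Hermitian form of `D` is negative definite on no two-dimensional subspace. -/
def NoNegDefPlane (D : Matrix ι ι ℂ) : Prop :=
  ∀ u v : ι → ℂ, ∃ α β : ℂ, (α ≠ 0 ∨ β ≠ 0) ∧
    0 ≤ (star (α • u + β • v) ⬝ᵥ D *ᵥ (α • u + β • v)).re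

theorem Matrix.exists_mulVec_smul_add_smul_eq_zero {m K : Type*} [Field K]
    {X : Matrix m ι K} (hX : X.rank ≤ 1) (u v : ι → K) :
    ∃ α β : K, (α ≠ 0 ∨ β ≠ 0) ∧ X *ᵥ (α • u + β • v) = 0 := by
  by_contra! h
  have hli : LinearIndependent K ![X *ᵥ u, X *ᵥ v] := by
    refine LinearIndependent.pair_iff.mpr fun s t hst => ?_
    by_contra hst'
    refine h s t (not_and_or.mp hst') ?_
    rwa [mulVec_add, mulVec_smul, mulVec_smul]
  have hspan : Submodule.span K (Set.range ![X *ᵥ u, X *ᵥ v]) ≤ LinearMap.range X.mulVecLin := by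
    rw [Submodule.span_le, Set.range_subset_iff]
    intro i
    fin_cases i <;> exact ⟨_, rfl⟩
  have h2 := (finrank_span_eq_card hli).symm.trans_le (Submodule.finrank_mono hspan)
  rw [Fintype.card_fin] at h2
  exact absurd (h2.trans hX) (by norm_num)

theorem noNegDefPlane_sub_of_rank_le_one {X X' : Matrix ι ι ℂ} (hX' : X'.PosSemidef)
    (hX : X.rank ≤ 1) : NoNegDefPlane (X' - X) := by
  intro u v
  obtain ⟨α, β, hαβ, hw⟩ := X.exists_mulVec_smul_add_smul_eq_zero hX u v
  refine ⟨α, β, hαβ, ?_⟩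
  rw [sub_mulVec, hw, sub_zero]
  exact (Complex.le_def.mp (hX'.dotProduct_mulVec_nonneg _)).1

theorem two_mul_mul_lt_add_of_sq_lt_mul {A B k p q : ℝ} (hA : 0 < A) (hk : k ^ 2 < A * B)
    (hpq : p ≠ 0 ∨ q ≠ 0) : 2 * p * q * k < A * p ^ 2 + B * q ^ 2 := by
  suffices 0 < A * (A * p ^ 2 + B * q ^ 2 - 2 * p * q * k) by
    linarith [pos_of_mul_pos_right this hA.le]
  rw [show A * (A * p ^ 2 + B * q ^ 2 - 2 * p * q * k)
      = (A * p - k * q) ^ 2 + (A * B - k ^ 2) * q ^ 2 by ring]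
  rcases eq_or_ne q 0 with rfl | hq
  · have := mul_ne_zero hA.ne' (hpq.resolve_right (not_not.mpr rfl))
    simpa using sq_pos_of_ne_zero this
  · have : 0 < A * B - k ^ 2 := by linarith
    positivity

theorem re_star_dotProduct_mulVec_smul_add_smul_lt_zero {D : Matrix ι ι ℂ} (hD : D.IsHermitian)
    {u v : ι → ℂ} {A B : ℝ} (hA : 0 < A) (hu : star u ⬝ᵥ D *ᵥ u = -A)
    (hv : star v ⬝ᵥ D *ᵥ v = -B) (huv : ‖star u ⬝ᵥ D *ᵥ v‖ ^ 2 < A * B) {α β : ℂ}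
    (hαβ : α ≠ 0 ∨ β ≠ 0) : (star (α • u + β • v) ⬝ᵥ D *ᵥ (α • u + β • v)).re < 0 := by
  set κ := star u ⬝ᵥ D *ᵥ v
  have hvu : star v ⬝ᵥ D *ᵥ u = starRingEnd ℂ κ := by
    rw [star_dotProduct, star_mulVec, hD.eq, ← dotProduct_mulVec]
    rfl
  have hexp : star (α • u + β • v) ⬝ᵥ D *ᵥ (α • u + β • v)
      = ((-A * ‖α‖ ^ 2 - B * ‖β‖ ^ 2 : ℝ) : ℂ)
        + (starRingEnd ℂ α * β * κ + starRingEnd ℂ (starRingEnd ℂ α * β * κ)) := by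
    simp only [star_add, star_smul, mulVec_add, mulVec_smul, dotProduct_add, add_dotProduct,
      dotProduct_smul, smul_dotProduct, hu, hv, hvu, smul_eq_mul, Complex.star_def]
    push_cast
    rw [← Complex.conj_mul', ← Complex.conj_mul', map_mul, map_mul, Complex.conj_conj]
    ring
  have hκ : (starRingEnd ℂ α * β * κ).re ≤ ‖α‖ * ‖β‖ * ‖κ‖ := by
    simpa using Complex.re_le_norm (starRingEnd ℂ α * β * κ)
  have := two_mul_mul_lt_add_of_sq_lt_mul hA huv (p := ‖α‖) (q := ‖β‖) (by simpa using hαβ)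
  rw [hexp, Complex.add_re, Complex.add_re, Complex.conj_re, Complex.ofReal_re]
  linarith

variable [DecidableEq ι]

theorem star_single_add_smul_single_dotProduct_mulVec (D : Matrix ι ι ℂ) (a b c d : ι)
    (τ χ : ℂ) :
    star (Pi.single a 1 + τ • Pi.single b 1) ⬝ᵥ D *ᵥ (Pi.single c 1 + χ • Pi.single d 1)
      = D a c + χ * D a d + starRingEnd ℂ τ * (D b c + χ * D b d) := by
  simp only [star_add, Pi.star_single, star_one, star_smul, RCLike.star_def, mulVec_add,
    mulVec_single, MulOpposite.op_one, one_smul, mulVec_smul, dotProduct_add, add_dotProduct,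
    single_dotProduct, col_apply, one_mul, smul_dotProduct, smul_eq_mul, dotProduct_smul]
  ring

theorem star_dotProduct_mulVec_single_sub_conj_smul_single {D : Matrix ι ι ℂ}
    (hD : D.IsHermitian) {a b : ι} (ha : D a a = 0) (hb : D b b = 0) (t : ℝ) :
    star (Pi.single a 1 + (-t * starRingEnd ℂ (D a b)) • Pi.single b 1) ⬝ᵥ
      D *ᵥ (Pi.single a 1 + (-t * starRingEnd ℂ (D a b)) • Pi.single b 1)
      = -(2 * t * ‖D a b‖ ^ 2 : ℝ) := by
  rw [star_single_add_smul_single_dotProduct_mulVec, ha, hb, ← hD.apply b a]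
  simp
  linear_combination (-2 * (t : ℂ)) * Complex.mul_conj' (D a b)

theorem not_noNegDefPlane {D : Matrix ι ι ℂ} (hD : D.IsHermitian) {a b c d : ι}
    (ha : D a a = 0) (hb : D b b = 0) (hc : D c c = 0) (hd : D d d = 0)
    (hbc : D b c = 0) (hbd : D b d = 0) (hab : D a b ≠ 0) (hcd : D c d ≠ 0) :
    ¬ NoNegDefPlane D := by
  set κ := D a c - starRingEnd ℂ (D c d) * D a d
  -- `κ` is the value of the form on the pair below, independent of `t`; this `t` makes the
  -- form's Gram matrix `!![-2t‖D a b‖², κ; κ̄, -2‖D c d‖²]` negative definite.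
  set t := (‖κ‖ ^ 2 + 1) / (4 * ‖D a b‖ ^ 2 * ‖D c d‖ ^ 2)
  have ht : 0 < t := by positivity
  have hκ : ‖κ‖ ^ 2 < 2 * t * ‖D a b‖ ^ 2 * (2 * ‖D c d‖ ^ 2) := by
    have : 2 * t * ‖D a b‖ ^ 2 * (2 * ‖D c d‖ ^ 2) = ‖κ‖ ^ 2 + 1 := by
      simp only [t]
      field_simp
      ring
    linarith
  intro h
  obtain ⟨α, β, hαβ, hnonneg⟩ := h (Pi.single a 1 + (-t * starRingEnd ℂ (D a b)) • Pi.single b 1)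
    (Pi.single c 1 + (-(1 : ℝ) * starRingEnd ℂ (D c d)) • Pi.single d 1)
  refine (re_star_dotProduct_mulVec_smul_add_smul_lt_zero hD (by positivity)
    (star_dotProduct_mulVec_single_sub_conj_smul_single hD ha hb t)
    (star_dotProduct_mulVec_single_sub_conj_smul_single hD hc hd 1) ?_ hαβ).not_ge hnonneg
  rw [star_single_add_smul_single_dotProduct_mulVec, hbc, hbd]
  simpa [← sub_eq_add_neg] using hκ

end QuadraticForm

section Measurement

theorem frobNorm_pos {n : ℕ} {X : Matrix (Fin n) (Fin n) ℂ} (hX : X ≠ 0) : 0 < frobNorm X := by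
  obtain ⟨i, j, hij⟩ : ∃ i j, X i j ≠ 0 := by
    by_contra! h
    exact hX (Matrix.ext h)
  refine Real.sqrt_pos.mpr (Finset.sum_pos' (fun i _ => ?_) ⟨i, Finset.mem_univ _, ?_⟩)
  · exact Finset.sum_nonneg fun j _ => Complex.normSq_nonneg _
  · exact Finset.sum_pos' (fun j _ => Complex.normSq_nonneg _)
      ⟨j, Finset.mem_univ _, Complex.normSq_pos.mpr hij⟩

theorem trace_vecMulVec_star_mul {ι : Type*} [Fintype ι] (y : ι → ℂ) (A : Matrix ι ι ℂ) :
    (vecMulVec y (star y) * A).trace = star y ⬝ᵥ A *ᵥ y := by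
  rw [vecMulVec_mul, trace_vecMulVec, dotProduct_comm, dotProduct_mulVec]

theorem re_trace_mul_sub_eq_zero_of_measOf_eq {n : ℕ} {ι : Type*} [Fintype ι]
    {G : ι → Matrix (Fin n) (Fin n) ℂ} {X X' : Matrix (Fin n) (Fin n) ℂ}
    (h : measOf G X = measOf G X') (i : ι) : ((G i * (X' - X)).trace).re = 0 := by
  have := congrArg (fun v => v i) (map_sub (measOf G) X' X)
  simp_all [measOf]

theorem star_dotProduct_mulVec_eq_zero_of_re_trace {n : ℕ} {D : Matrix (Fin n) (Fin n) ℂ}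
    (hD : D.IsHermitian) {y : Fin n → ℂ} (hy : y ≠ 0)
    (h : (((frobNorm (vecMulVec y (star y)))⁻¹ • vecMulVec y (star y) * D).trace).re = 0) :
    star y ⬝ᵥ D *ᵥ y = 0 := by
  have hF := frobNorm_pos (vecMulVec_ne_zero hy (star_ne_zero.mpr hy))
  rw [smul_mul, trace_smul, trace_vecMulVec_star_mul, Complex.smul_re, smul_eq_mul,
    mul_eq_zero, inv_eq_zero] at h
  exact Complex.ext (h.resolve_left hF.ne') (hD.im_star_dotProduct_mulVec_self y)

theorem star_dotProduct_mulVec_pow {n : ℕ} (D : Matrix (Fin n) (Fin n) ℂ) (z : ℂ) :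
    star (fun j : Fin n => z ^ (j : ℕ)) ⬝ᵥ D *ᵥ (fun j => z ^ (j : ℕ))
      = ∑ j : Fin n, ∑ l : Fin n, starRingEnd ℂ z ^ (j : ℕ) * z ^ (l : ℕ) * D j l := by
  simp only [dotProduct, mulVec, Finset.mul_sum]
  refine Finset.sum_congr rfl fun j _ => Finset.sum_congr rfl fun l _ => ?_
  simp
  ring

end Measurement

section Antidiagonal

open Polynomial

variable {n : ℕ}

def antidiagonalSum (F : Fin n → Fin n → ℂ) (s : ℕ) : ℂ :=
  ∑ j : Fin n, ∑ l : Fin n, if (j : ℕ) + l = s then F j l else 0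

theorem antidiagonalSum_eq_zero_of_eval {F : Fin n → Fin n → ℂ} (hF : ∀ j, F j j = 0)
    {S : Finset ℂ} (hS0 : 0 ∉ S) (hS : 2 * n - 3 ≤ S.card)
    (heval : ∀ z ∈ S, ∑ j, ∑ l, F j l * z ^ ((j : ℕ) + l) = 0) (s : ℕ) :
    antidiagonalSum F s = 0 := by
  set P : ℂ[X] := ∑ j, ∑ l, C (F j l) * X ^ ((j : ℕ) + l)
  have hoff : ∀ j l, F j l ≠ 0 → 0 < (j : ℕ) + l ∧ (j : ℕ) + l ≤ 2 * n - 3 := by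
    intro j l hjl
    have : (j : ℕ) ≠ l := Fin.val_ne_of_ne (by rintro rfl; exact hjl (hF j))
    omega
  have hdeg : P.natDegree ≤ 2 * n - 3 := by
    refine natDegree_sum_le_of_forall_le _ _ fun j _ =>
      natDegree_sum_le_of_forall_le _ _ fun l _ => ?_
    by_cases h : F j l = 0
    · simp [h]
    · exact (natDegree_C_mul_X_pow_le _ _).trans (hoff j l h).2
  have hroot : ∀ z ∈ insert 0 S, P.eval z = 0 := by
    intro z hz
    simp only [P, eval_finsetSum, eval_mul, eval_C, eval_pow, eval_X]
    rcases Finset.mem_insert.mp hz with rfl | hz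
    · refine Finset.sum_eq_zero fun j _ => Finset.sum_eq_zero fun l _ => ?_
      by_cases h : F j l = 0
      · simp [h]
      · simp [zero_pow (hoff j l h).1.ne']
    · exact heval z hz
  have hP : P = 0 := eq_zero_of_natDegree_lt_card_of_eval_eq_zero' P _ hroot (by
    rw [Finset.card_insert_of_notMem hS0]; omega)
  have hcoeff : P.coeff s = antidiagonalSum F s := by
    simp only [P, antidiagonalSum, finsetSum_coeff, coeff_C_mul_X_pow, @eq_comm _ s]
  rw [← hcoeff, hP, coeff_zero]

theorem antidiagonalSum_eq_zero_of_star_dotProduct_mulVec {m : ℕ}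
    {D : Matrix (Fin n) (Fin n) ℂ} (hdiag : ∀ j, D j j = 0) (ζ : ℂ) {x : Fin m → ℝ}
    (hx0 : ∀ k, x k ≠ 0) (hx : Function.Injective x) (hm : 2 * n - 3 ≤ m)
    (hQ : ∀ k, star (fun j : Fin n => ((x k : ℂ) * ζ) ^ (j : ℕ)) ⬝ᵥ
      D *ᵥ (fun j => ((x k : ℂ) * ζ) ^ (j : ℕ)) = 0) (s : ℕ) :
    antidiagonalSum (fun j l => starRingEnd ℂ ζ ^ (j : ℕ) * ζ ^ (l : ℕ) * D j l) s = 0 := by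
  have hinj : Function.Injective fun k => (x k : ℂ) := Complex.ofReal_injective.comp hx
  refine antidiagonalSum_eq_zero_of_eval (by simp [hdiag])
    (S := Finset.univ.image fun k => (x k : ℂ)) (by simpa using hx0) (by rwa [Finset.card_image_of_injective _ hinj, Finset.card_fin]) ?_ s
  simp only [Finset.mem_image, Finset.mem_univ, true_and, forall_exists_index,
    forall_apply_eq_imp_iff]
  intro k
  rw [← hQ k, star_dotProduct_mulVec_pow]
  refine Finset.sum_congr rfl fun j _ => Finset.sum_congr rfl fun l _ => ?_
  simp only [map_mul, Complex.conj_ofReal]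
  ring

theorem antidiagonalSum_eq_add {F : Fin n → Fin n → ℂ} {j l : Fin n} (hjl : j ≠ l)
    (hF : ∀ c d : Fin n, (c : ℕ) + d = j + l → (c, d) ≠ (j, l) → (c, d) ≠ (l, j) → F c d = 0) :
    antidiagonalSum F (j + l) = F j l + F l j := by
  rw [antidiagonalSum, ← Fintype.sum_prod_type', Fintype.sum_eq_add (j, l) (l, j) (by simp [hjl])]
  · simp [add_comm]
  · rintro ⟨c, d⟩ ⟨h₁, h₂⟩
    split_ifs with h
    · exact hF c d h h₁ h₂
    · rfl

theorem eq_zero_of_add_eq_zero_of_sq_ne_sq {K : Type*} [Field K] {p q z w : K}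
    (h₁ : p * z + q * w = 0) (h₂ : q * z + p * w = 0) (hpq : p ^ 2 ≠ q ^ 2) : z = 0 := by
  have : (p ^ 2 - q ^ 2) * z = 0 := by linear_combination p * h₁ - q * h₂
  exact (mul_eq_zero.mp this).resolve_left (sub_ne_zero.mpr hpq)

theorem conj_pow_mul_pow_sq_ne {ω : ℂ} (hω : IsPrimitiveRoot (ω ^ 4) n) {a b : ℕ}
    (hab : a < b) (hb : b < n) :
    (starRingEnd ℂ ω ^ a * ω ^ b) ^ 2 ≠ (starRingEnd ℂ ω ^ b * ω ^ a) ^ 2 := by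
  intro h
  have hnorm : ‖ω‖ = 1 := by
    have := hω.norm'_eq_one (by omega)
    rw [norm_pow] at this
    exact (pow_eq_one_iff_of_nonneg (norm_nonneg ω) (by norm_num)).mp this
  have hc : starRingEnd ℂ ω * ω = 1 := by rw [Complex.conj_mul', hnorm]; simp
  have key : (ω ^ 4) ^ b = (ω ^ 4) ^ a :=
    calc (ω ^ 4) ^ b = (starRingEnd ℂ ω * ω) ^ (2 * a) * ω ^ (4 * b) := by rw [hc]; ring
    _ = (starRingEnd ℂ ω ^ a * ω ^ b) ^ 2 * (ω ^ a * ω ^ b) ^ 2 := by ring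
    _ = (starRingEnd ℂ ω ^ b * ω ^ a) ^ 2 * (ω ^ a * ω ^ b) ^ 2 := by rw [h]
    _ = (starRingEnd ℂ ω * ω) ^ (2 * b) * ω ^ (4 * a) := by ring
    _ = (ω ^ 4) ^ a := by rw [hc]; ring
  exact hab.ne' (hω.pow_inj hb (hab.trans hb) key)

variable {D : Matrix (Fin n) (Fin n) ℂ} {ω : ℂ}

theorem apply_eq_zero_of_antidiagonal_above (hD : D.IsHermitian) (hdiag : ∀ j, D j j = 0)
    (hω : IsPrimitiveRoot (ω ^ 4) n)
    (h₁ : ∀ s, antidiagonalSum (fun j l => starRingEnd ℂ ω ^ (j : ℕ) * ω ^ (l : ℕ) * D j l) s = 0)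
    (h₂ : ∀ s, antidiagonalSum (fun j l => ω ^ (j : ℕ) * starRingEnd ℂ ω ^ (l : ℕ) * D j l) s = 0)
    (hplane : NoNegDefPlane D) {s : ℕ} (habove : ∀ j l : Fin n, s < (j : ℕ) + l → D j l = 0)
    {j l : Fin n} (hs : (j : ℕ) + l = s) : D j l = 0 := by
  wlog hjl : j < l generalizing j l
  · rcases (not_lt.mp hjl).eq_or_lt with rfl | hlj
    · exact hdiag _
    · rw [← hD.apply, this (by omega) hlj, star_zero]
  by_contra hne
  have hunique : ∀ c d : Fin n, c < d → (c : ℕ) + d = s → D c d ≠ 0 → c = j := by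
    intro c d hcd hcds hDcd
    by_contra hcj
    rcases lt_or_gt_of_ne hcj with hc | hc
    · exact not_noNegDefPlane hD (hdiag c) (hdiag d) (hdiag j) (hdiag l)
        (habove _ _ (by omega)) (habove _ _ (by omega)) hDcd hne hplane
    · exact not_noNegDefPlane hD (hdiag j) (hdiag l) (hdiag c) (hdiag d)
        (habove _ _ (by omega)) (habove _ _ (by omega)) hne hDcd hplane
  have hothers : ∀ c d : Fin n, (c : ℕ) + d = j + l → (c, d) ≠ (j, l) → (c, d) ≠ (l, j) →
      D c d = 0 := by
    intro c d hcds hne₁ hne₂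
    by_contra hDcd
    rcases lt_trichotomy c d with hcd | rfl | hdc
    · have := hunique c d hcd (by omega) hDcd
      exact hne₁ (by ext <;> simp <;> omega)
    · exact hDcd (hdiag c)
    · have := hunique d c hdc (by omega) (by rwa [← hD.apply, star_ne_zero])
      exact hne₂ (by ext <;> simp <;> omega)
  have hsum : ∀ φ : Fin n → Fin n → ℂ,
      antidiagonalSum (fun c d => φ c d * D c d) s = φ j l * D j l + φ l j * star (D j l) := by
    intro φ
    rw [← hs, antidiagonalSum_eq_add hjl.ne fun c d h hne₁ hne₂ => by
      rw [hothers c d h hne₁ hne₂, mul_zero], hD.apply]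
  have e₁ := h₁ s
  have e₂ := h₂ s
  rw [hsum] at e₁ e₂
  exact hne (eq_zero_of_add_eq_zero_of_sq_ne_sq e₁ (by linear_combination e₂)
    (conj_pow_mul_pow_sq_ne hω hjl l.isLt))

theorem eq_zero_of_antidiagonalSum_eq_zero (hD : D.IsHermitian) (hdiag : ∀ j, D j j = 0)
    (hω : IsPrimitiveRoot (ω ^ 4) n)
    (h₁ : ∀ s, antidiagonalSum (fun j l => starRingEnd ℂ ω ^ (j : ℕ) * ω ^ (l : ℕ) * D j l) s = 0)
    (h₂ : ∀ s, antidiagonalSum (fun j l => ω ^ (j : ℕ) * starRingEnd ℂ ω ^ (l : ℕ) * D j l) s = 0)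
    (hplane : NoNegDefPlane D) : D = 0 := by
  have key : ∀ m, ∀ j l : Fin n, 2 * n ≤ (j : ℕ) + l + m → D j l = 0 := by
    intro m
    induction m with
    | zero => intro j l h; omega
    | succ m ih =>
      intro j l h
      by_cases h' : 2 * n ≤ (j : ℕ) + l + m
      · exact ih j l h'
      · exact apply_eq_zero_of_antidiagonal_above hD hdiag hω h₁ h₂ hplane
          (fun c d hcd => ih c d (by omega)) rfl
  ext j l
  exact key (2 * n) j l (by omega)

end Antidiagonal

theorem pvec_eq (n : ℕ) (x : ℝ) :
    pvec n x = fun j : Fin n =>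
      ((x : ℂ) * Complex.exp (Real.pi * Complex.I / (2 * n))) ^ (j : ℕ) := by
  ext j
  rw [pvec, mul_pow, ← Complex.exp_nat_mul]
  ring_nf

theorem star_pvec_eq (n : ℕ) (x : ℝ) :
    star (pvec n x) = fun j : Fin n =>
      ((x : ℂ) * starRingEnd ℂ (Complex.exp (Real.pi * Complex.I / (2 * n)))) ^ (j : ℕ) := by
  ext j
  simp [pvec_eq]

theorem isPrimitiveRoot_exp_pow_four {n : ℕ} (hn : n ≠ 0) :
    IsPrimitiveRoot (Complex.exp (Real.pi * Complex.I / (2 * n)) ^ 4) n := by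
  rw [← Complex.exp_nat_mul]
  convert Complex.isPrimitiveRoot_exp n hn using 2
  push_cast
  field_simp
  ring

/-- the measurement built from `e_i e_i*` (`i = 0,…,n−1`) and the normalized
rank-one matrices `v_k v_k*/‖v_k v_k*‖₂`, `v̄_k v̄_k*/‖v̄_k v̄_k*‖₂` (`k = 1,…,2n−3`)
is `1`-complete, with `5n−6` outcomes. -/
theorem stmt2 {n : ℕ} (hn : 2 ≤ n) (x : Fin (2 * n - 3) → ℝ)
    (hx0 : ∀ k, x k ≠ 0) (hxmono : StrictMono x) :
    rComplete (measOf (fun idx : Fin n ⊕ Fin (2 * n - 3) × Bool =>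
      match idx with
      | Sum.inl i => Matrix.single i i (1 : ℂ)
      | Sum.inr (k, false) =>
          (frobNorm (vecMulVec (pvec n (x k)) (star (pvec n (x k)))))⁻¹ •
            vecMulVec (pvec n (x k)) (star (pvec n (x k)))
      | Sum.inr (k, true) =>
          (frobNorm (vecMulVec (star (pvec n (x k))) (star (star (pvec n (x k))))))⁻¹ •
            vecMulVec (star (pvec n (x k))) (star (star (pvec n (x k)))))) 1 ∧
    Fintype.card (Fin n ⊕ Fin (2 * n - 3) × Bool) = 5 * n - 6 := by
  refine ⟨fun X X' hX hrank hX' hne hM => hne (sub_eq_zero.mp ?_).symm, by simp; omega⟩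
  set ω := Complex.exp (Real.pi * Complex.I / (2 * n))
  have hD : (X' - X).IsHermitian := hX'.isHermitian.sub hX.isHermitian
  have hmeas := re_trace_mul_sub_eq_zero_of_measOf_eq hM
  have hdiag : ∀ j, (X' - X) j j = 0 := fun j => by
    rw [← hD.coe_re_apply_self j, RCLike.ofReal_eq_zero]
    simpa [trace_single_mul] using hmeas (Sum.inl j)
  have hpvec : ∀ k, pvec n (x k) ≠ 0 := fun k h => by
    simpa [pvec] using congrFun h ⟨0, by omega⟩
  have hQ₁ : ∀ k, star (fun j : Fin n => ((x k : ℂ) * ω) ^ (j : ℕ)) ⬝ᵥ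
      (X' - X) *ᵥ (fun j => ((x k : ℂ) * ω) ^ (j : ℕ)) = 0 := fun k => by
    rw [← pvec_eq]
    exact star_dotProduct_mulVec_eq_zero_of_re_trace hD (hpvec k) (hmeas (Sum.inr (k, false)))
  have hQ₂ : ∀ k, star (fun j : Fin n => ((x k : ℂ) * starRingEnd ℂ ω) ^ (j : ℕ)) ⬝ᵥ
      (X' - X) *ᵥ (fun j => ((x k : ℂ) * starRingEnd ℂ ω) ^ (j : ℕ)) = 0 := fun k => by
    rw [← star_pvec_eq]
    exact star_dotProduct_mulVec_eq_zero_of_re_trace hD (star_ne_zero.mpr (hpvec k))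
      (hmeas (Sum.inr (k, true)))
  have h₂ := antidiagonalSum_eq_zero_of_star_dotProduct_mulVec hdiag (starRingEnd ℂ ω) hx0
    hxmono.injective le_rfl hQ₂
  simp only [Complex.conj_conj] at h₂
  exact eq_zero_of_antidiagonalSum_eq_zero hD hdiag (isPrimitiveRoot_exp_pow_four (by omega))
    (antidiagonalSum_eq_zero_of_star_dotProduct_mulVec hdiag ω hx0 hxmono.injective le_rfl hQ₁)
    h₂ (noNegDefPlane_sub_of_rank_le_one hX' hrank)
end
end

section
/- Let 1 ≤ q ≤ n−1 and let A be a real n×q matrix that is totally non-singular. Then there exists a totally non-singular real n×(n−q) matrix B such that AᵗB = 0. -/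
/-!
The matrices `B` with `AᵀB = 0` form a linear space `V`. If for each minor some `B_x ∈ V` makes
it nonzero, then that minor of `∑ c_x B_x` is a nonzero polynomial in the coefficients `c`, and
over an infinite field finitely many nonzero polynomials have a common non-root.
To find `B_x`, note that the rows of `B ∈ V` indexed by any `s ≤ n - q` rows `f` can be
prescribed: the matrix `[A | E_f]` (with `E_f` the columns of the identity indexed by `f`) has
trivial kernel, because `A x` then vanishes on the `n - s ≥ q` rows outside `f`, where some
`q × q` minor of `A` is invertible; hence `[A | E_f]ᵀ` is surjective, as seen through the
invertible Gram matrix of `[A | E_f]`.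
-/

open Matrix

noncomputable section

/-- A matrix is totally non-singular if every minor (the determinant of every square
submatrix) is nonzero. -/
def TotallyNonSingular {K : Type*} [CommRing K] {a b : ℕ} (A : Matrix (Fin a) (Fin b) K) :
    Prop :=
  ∀ (s : ℕ) (f : Fin s → Fin a) (g : Fin s → Fin b),
    StrictMono f → StrictMono g → (A.submatrix f g).det ≠ 0

theorem Matrix.exists_transpose_mul_eq_of_ker_mulVecLin_eq_bot
    {K : Type*} [Field K] [LinearOrder K] [IsStrictOrderedRing K]
    {m k l : Type*} [Fintype m] [Fintype k] [DecidableEq k] {M : Matrix m k K}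
    (hM : LinearMap.ker M.mulVecLin = ⊥) (T : Matrix k l K) : ∃ W : Matrix m l K, Mᵀ * W = T := by
  have hGram : IsUnit (Mᵀ * M).det := by
    rw [← isUnit_iff_isUnit_det, ← mulVec_injective_iff_isUnit, ← coe_mulVecLin,
      ← LinearMap.ker_eq_bot, ker_mulVecLin_transpose_mul_self]
    exact hM
  refine ⟨M * ((Mᵀ * M)⁻¹ * T), ?_⟩
  rw [← Matrix.mul_assoc, ← Matrix.mul_assoc, mul_nonsing_inv _ hGram, Matrix.one_mul]

theorem TotallyNonSingular.eq_zero_of_mulVec_eq_zero_on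
    {K : Type*} [CommRing K] [IsDomain K] {n q : ℕ} {A : Matrix (Fin n) (Fin q) K}
    (hA : TotallyNonSingular A) {t : Finset (Fin n)} (ht : q ≤ t.card) {x : Fin q → K}
    (hx : ∀ i ∈ t, (A *ᵥ x) i = 0) : x = 0 := by
  obtain ⟨t', ht't, ht'⟩ := Finset.exists_subset_card_eq ht
  let rows := t'.orderEmbOfFin ht'
  refine eq_zero_of_mulVec_eq_zero (hA q rows id rows.strictMono strictMono_id) ?_
  funext j
  exact hx _ (ht't (t'.orderEmbOfFin_mem ht' j))

theorem TotallyNonSingular.exists_transpose_mul_eq_zero_and_submatrix_eq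
    {K : Type*} [Field K] [LinearOrder K] [IsStrictOrderedRing K] {n q s : ℕ}
    {A : Matrix (Fin n) (Fin q) K} (hA : TotallyNonSingular A) (hs : s + q ≤ n)
    {f : Fin s → Fin n} (hf : Function.Injective f) {l : Type*} (T : Matrix (Fin s) l K) :
    ∃ W : Matrix (Fin n) l K, Aᵀ * W = 0 ∧ W.submatrix f id = T := by
  classical
  set E : Matrix (Fin n) (Fin s) K := (1 : Matrix (Fin n) (Fin n) K).submatrix id f
  have hE : ∀ y i, (E *ᵥ y) i = ∑ k, if i = f k then y k else 0 := by
    intro y i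
    simp [E, mulVec, dotProduct, one_apply]
  have hM : LinearMap.ker (fromCols A E).mulVecLin = ⊥ := by
    rw [ker_mulVecLin_eq_bot_iff]
    intro v hv
    rw [fromCols_mulVec] at hv
    have hx : v ∘ Sum.inl = 0 := by
      refine hA.eq_zero_of_mulVec_eq_zero_on (t := (Finset.univ.image f)ᶜ) ?_ fun i hi => ?_
      · rw [Finset.card_compl, Finset.card_image_of_injective _ hf]
        simp only [Finset.card_univ, Fintype.card_fin]
        omega
      · have hEi : (E *ᵥ (v ∘ Sum.inr)) i = 0 :=
          (hE _ i).trans (Finset.sum_eq_zero fun k _ => if_neg fun h => by simp_all)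
        simpa [hEi] using congrFun hv i
    have hy : v ∘ Sum.inr = 0 := by
      funext k
      have := congrFun hv (f k)
      simpa [hx, hE, hf.eq_iff] using this
    funext p
    cases p with
    | inl j => exact congrFun hx j
    | inr k => exact congrFun hy k
  obtain ⟨W, hW⟩ := exists_transpose_mul_eq_of_ker_mulVecLin_eq_bot hM (fromRows 0 T)
  rw [transpose_fromCols, fromRows_mul, fromRows_inj.eq_iff] at hW
  refine ⟨W, hW.1, ?_⟩
  rw [← hW.2]
  ext k j
  simp [E, mul_apply, one_apply]

theorem MvPolynomial.exists_forall_eval_ne_zero {R σ ι : Type*} [CommRing R] [IsDomain R]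
    [Infinite R] [Fintype ι] {p : ι → MvPolynomial σ R} (hp : ∀ i, p i ≠ 0) :
    ∃ x : σ → R, ∀ i, eval x (p i) ≠ 0 := by
  have hprod : ∏ i, p i ≠ 0 := Finset.prod_ne_zero_iff.mpr fun i _ => hp i
  obtain ⟨x, hx⟩ : ∃ x, eval x (∏ i, p i) ≠ 0 := by
    by_contra! h
    exact hprod (funext fun x => by rw [h x, map_zero])
  rw [map_prod, Finset.prod_ne_zero_iff] at hx
  exact ⟨x, fun i => hx i (Finset.mem_univ i)⟩

def Matrix.genericLinearCombination {R ι a b : Type*} [CommRing R] [Fintype ι]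
    (B : ι → Matrix a b R) : Matrix a b (MvPolynomial ι R) :=
  ∑ i, (MvPolynomial.X i : MvPolynomial ι R) • (B i).map MvPolynomial.C

theorem Matrix.map_eval_genericLinearCombination {R ι a b : Type*} [CommRing R] [Fintype ι]
    (B : ι → Matrix a b R) (c : ι → R) :
    (genericLinearCombination B).map (MvPolynomial.eval c) = ∑ i, c i • B i := by
  ext j k
  simp [genericLinearCombination, Matrix.sum_apply]

theorem Submodule.exists_mem_totallyNonSingular {K : Type*} [CommRing K] [IsDomain K]
    [Infinite K] {a b : ℕ} (V : Submodule K (Matrix (Fin a) (Fin b) K))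
    (hV : ∀ (s : ℕ) (f : Fin s → Fin a) (g : Fin s → Fin b), StrictMono f → StrictMono g →
      ∃ B ∈ V, (B.submatrix f g).det ≠ 0) :
    ∃ B ∈ V, TotallyNonSingular B := by
  let Shape := {x : Σ s : Fin (b + 1), (Fin s → Fin a) × (Fin s → Fin b) //
    StrictMono x.2.1 ∧ StrictMono x.2.2}
  choose B hBV hB using fun x : Shape => hV _ _ _ x.2.1 x.2.2
  let minor (x : Shape) : MvPolynomial Shape K :=
    ((genericLinearCombination B).submatrix x.1.2.1 x.1.2.2).det
  have eval_minor (c : Shape → K) (x : Shape) :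
      MvPolynomial.eval c (minor x) = ((∑ i, c i • B i).submatrix x.1.2.1 x.1.2.2).det := by
    rw [RingHom.map_det, RingHom.mapMatrix_apply, ← submatrix_map,
      map_eval_genericLinearCombination]
  have hminor (x : Shape) : minor x ≠ 0 := by
    intro h
    have hsingle : ∑ i, (Pi.single x 1 : Shape → K) i • B i = B x := by simp [Pi.single_apply]
    apply hB x
    rw [← hsingle, ← eval_minor, h, map_zero]
  obtain ⟨c, hc⟩ := MvPolynomial.exists_forall_eval_ne_zero hminor
  refine ⟨∑ i, c i • B i, V.sum_mem fun i _ => V.smul_mem _ (hBV i), fun s f g hf hg => ?_⟩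
  have hs : s < b + 1 := Nat.lt_succ_of_le (Fin.le_of_injective g hg.injective)
  simpa only [eval_minor] using hc ⟨⟨⟨s, hs⟩, f, g⟩, hf, hg⟩

theorem stmt8_general {n q : ℕ} (hqn : q ≤ n - 1)
    (A : Matrix (Fin n) (Fin q) ℝ) (hA : TotallyNonSingular A) :
    ∃ B : Matrix (Fin n) (Fin (n - q)) ℝ, TotallyNonSingular B ∧ Aᵀ * B = 0 := by
  let V := LinearMap.ker (mulLeftLinearMap (Fin (n - q)) ℝ Aᵀ)
  have hV (s : ℕ) (f : Fin s → Fin n) (g : Fin s → Fin (n - q)) (hf : StrictMono f)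
      (hg : StrictMono g) : ∃ B ∈ V, (B.submatrix f g).det ≠ 0 := by
    have hs : s + q ≤ n := by
      have := Fin.le_of_injective g hg.injective
      omega
    obtain ⟨W, hW, hWf⟩ := hA.exists_transpose_mul_eq_zero_and_submatrix_eq hs hf.injective
      ((1 : Matrix (Fin (n - q)) (Fin (n - q)) ℝ).submatrix g id)
    have hminor : W.submatrix f g = 1 := by
      rw [show W.submatrix f g = (W.submatrix f id).submatrix id g from rfl, hWf,
        submatrix_submatrix, Function.comp_id, Function.id_comp, submatrix_one _ hg.injective]
    exact ⟨W, hW, by simp [hminor]⟩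
  obtain ⟨B, hB, hBtns⟩ := V.exists_mem_totallyNonSingular hV
  exact ⟨B, hBtns, hB⟩

/-- for `1 ≤ q ≤ n−1` and a totally non-singular real `n×q` matrix `A`,
there is a totally non-singular real `n×(n−q)` matrix `B` with `AᵗB = 0`. -/
theorem stmt8 {n q : ℕ} (hq1 : 1 ≤ q) (hqn : q ≤ n - 1)
    (A : Matrix (Fin n) (Fin q) ℝ) (hA : TotallyNonSingular A) :
    ∃ B : Matrix (Fin n) (Fin (n - q)) ℝ, TotallyNonSingular B ∧ Aᵀ * B = 0 :=
  stmt8_general hqn A hA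
end
end

section
/- Let M : H(n) → ℝ^m be an r-complete measurement. Then there exists a constant C > 0, independent of the error scale, such that for every ε > 0, every X_r ∈ S_r^n, every Hermitian E with ‖M(E)‖₂ ≤ ε, and every positive semidefinite Hermitian matrix Y with ‖M(Y) − M(X_r + E)‖₂ ≤ ε, one has ‖Y − X_r‖₂ ≤ C·ε. -/
open Matrix
open scoped ComplexOrder

noncomputable section

/-!
Write `D = Y - X` with `X ∈ S_r^n` and `Y ∈ S^n`. Splitting the spectral decomposition of `D`
into positive and negative parts gives `D / ‖D‖ = ∑ₖ wₖ wₖᴴ - ∑ⱼ vⱼ vⱼᴴ` with all vectors of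
norm at most `1`; since `D + X = Y ⪰ 0`, `D` has at most `rank X ≤ r` negative eigenvalues, so
`r` vectors `vⱼ` suffice. Such pairs `(w, v)` with `‖∑ wwᴴ - ∑ vvᴴ‖ = 1` form a compact set on
which `r`-completeness makes `‖M (∑ wwᴴ - ∑ vvᴴ)‖` positive, hence at least some `c > 0`. So
`c ‖Y - X‖ ≤ ‖M (Y - X)‖ ≤ 2ε`.
-/

attribute [local instance] Matrix.frobeniusNormedAddCommGroup Matrix.frobeniusNormedSpace

theorem frobNorm_eq_norm {n : ℕ} (X : Matrix (Fin n) (Fin n) ℂ) : frobNorm X = ‖X‖ := by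
  simp [frobNorm, frobenius_norm_def, Complex.normSq_eq_norm_sq, Real.sqrt_eq_rpow]

namespace Matrix

variable {m ι κ : Type*} [Fintype ι] [Fintype κ]

/-- `∑ₖ vₖ vₖᴴ`, written as `A Aᴴ` for the matrix `A` whose columns are the `vₖ`. -/
def outerSum (v : ι → EuclideanSpace ℂ m) : Matrix m m ℂ :=
  of (fun i k => v k i) * (of fun i k => v k i)ᴴ

theorem outerSum_apply (v : ι → EuclideanSpace ℂ m) (i j : m) :
    outerSum v i j = ∑ k, v k i * star (v k j) := by
  simp [outerSum, mul_apply]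

theorem posSemidef_outerSum [Fintype m] (v : ι → EuclideanSpace ℂ m) :
    (outerSum v).PosSemidef :=
  posSemidef_self_mul_conjTranspose _

theorem rank_outerSum_le [Fintype m] (v : ι → EuclideanSpace ℂ m) :
    (outerSum v).rank ≤ Fintype.card ι :=
  (rank_mul_le_left _ _).trans (rank_le_card_width _)

theorem continuous_outerSum :
    Continuous (outerSum : (ι → EuclideanSpace ℂ m) → Matrix m m ℂ) := by
  have h : Continuous fun v : ι → EuclideanSpace ℂ m => of fun i k => v k i :=
    continuous_matrix fun i k => (PiLp.continuous_apply 2 _ i).comp (continuous_apply k)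
  exact h.matrix_mul h.matrix_conjTranspose

theorem outerSum_comp_of_injective {e : ι → κ} (he : e.Injective) {v : κ → EuclideanSpace ℂ m}
    (hv : ∀ k ∉ Set.range e, v k = 0) : outerSum (v ∘ e) = outerSum v := by
  ext i j
  simp only [outerSum_apply]
  exact Fintype.sum_of_injective e he _ _ (fun k hk => by simp [hv k hk]) fun _ => rfl

theorem exists_outerSum_eq [Fintype m] (v : ι → EuclideanSpace ℂ m) (s : Finset ι)
    (hv : ∀ k ∉ s, v k = 0) (hs : s.card ≤ Fintype.card κ) :
    ∃ w : κ → EuclideanSpace ℂ m, ‖w‖ ≤ ‖v‖ ∧ outerSum w = outerSum v := by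
  obtain ⟨e⟩ : Nonempty (s ↪ κ) := Function.Embedding.nonempty_of_card_le (by simpa using hs)
  set w := Function.extend e (v ∘ Subtype.val) 0
  have hwe : w ∘ e = v ∘ Subtype.val := funext (e.injective.extend_apply _ _)
  have hw0 : ∀ j ∉ Set.range e, w j = 0 := fun j hj =>
    Function.extend_apply' _ _ _ (by simpa using hj)
  refine ⟨w, (pi_norm_le_iff_of_nonneg (norm_nonneg v)).2 fun j => ?_, ?_⟩
  · by_cases hj : j ∈ Set.range e
    · obtain ⟨k, rfl⟩ := hj
      rw [← Function.comp_apply (f := w), hwe]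
      exact norm_le_pi_norm v k
    · simp [hw0 j hj]
  · rw [← outerSum_comp_of_injective e.injective hw0, hwe,
      outerSum_comp_of_injective Subtype.val_injective fun k hk => hv k (by simpa using hk)]

namespace IsHermitian

variable [Fintype m] [DecidableEq m] {D : Matrix m m ℂ} (hD : D.IsHermitian)

theorem abs_eigenvalues_le_norm (k : m) : |hD.eigenvalues k| ≤ ‖D‖ := by
  have hu : ‖hD.eigenvectorBasis k‖ = 1 := hD.eigenvectorBasis.norm_eq_one k
  calc |hD.eigenvalues k| = ‖replicateCol Unit (D *ᵥ hD.eigenvectorBasis k)‖ := by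
        rw [frobenius_norm_replicateCol, hD.mulVec_eigenvectorBasis]
        simp [norm_smul, hu]
    _ ≤ ‖D‖ * ‖replicateCol Unit (hD.eigenvectorBasis k : m → ℂ)‖ := by
        rw [replicateCol_mulVec]; exact frobenius_norm_mul _ _
    _ = ‖D‖ := by simp [frobenius_norm_replicateCol, hu]

theorem outerSum_sqrt_smul_eigenvectorBasis (g : m → ℝ) (hg : 0 ≤ g) :
    outerSum (fun k => (√(g k) : ℂ) • hD.eigenvectorBasis k) =
      Unitary.conjStarAlgAut ℂ _ hD.eigenvectorUnitary (diagonal fun k => (g k : ℂ)) := by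
  have hcols : (of fun i k => ((√(g k) : ℂ) • hD.eigenvectorBasis k) i) =
      (hD.eigenvectorUnitary : Matrix m m ℂ) * diagonal fun k => (√(g k) : ℂ) := by
    ext i k
    simp [mul_diagonal, mul_comm]
  have hsq : (diagonal fun k => (√(g k) : ℂ)) * (diagonal fun k => (√(g k) : ℂ))ᴴ =
      diagonal fun k => (g k : ℂ) := by
    rw [diagonal_conjTranspose, diagonal_mul_diagonal]
    congr 1; funext k
    simp [← Complex.ofReal_mul, Real.mul_self_sqrt (hg k)]
  rw [outerSum, hcols, conjTranspose_mul, Unitary.conjStarAlgAut_apply, ← hsq]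
  simp only [Matrix.mul_assoc, star_eq_conjTranspose]

theorem exists_outerSum_sub_eq_inv_norm_smul :
    ∃ w v : m → EuclideanSpace ℂ m, ‖w‖ ≤ 1 ∧ ‖v‖ ≤ 1 ∧
      (∀ k, 0 ≤ hD.eigenvalues k → v k = 0) ∧ outerSum w - outerSum v = ‖D‖⁻¹ • D := by
  set ev := hD.eigenvalues
  set u := hD.eigenvectorBasis
  have hunit : ∀ g : m → ℝ, (∀ k, 0 ≤ g k ∧ g k ≤ 1) → ‖fun k => (√(g k) : ℂ) • u k‖ ≤ 1 :=
    fun g hg => (pi_norm_le_iff_of_nonneg zero_le_one).2 fun k => by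
      simpa [norm_smul, u.norm_eq_one, abs_of_nonneg (Real.sqrt_nonneg _)] using (hg k).2
  have hpart : ∀ a : ℝ, |a| ≤ ‖D‖ → 0 ≤ a⁺ / ‖D‖ ∧ a⁺ / ‖D‖ ≤ 1 := fun a ha =>
    ⟨by positivity,
      div_le_one_of_le₀ ((sup_le (le_abs_self a) (abs_nonneg a)).trans ha) (norm_nonneg _)⟩
  refine ⟨fun k => (√((ev k)⁺ / ‖D‖) : ℂ) • u k, fun k => (√((ev k)⁻ / ‖D‖) : ℂ) • u k,
    hunit _ fun k => hpart _ (hD.abs_eigenvalues_le_norm k),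
    hunit _ fun k => by
      simpa only [posPart_neg] using hpart _ ((abs_neg _).trans_le (hD.abs_eigenvalues_le_norm k)),
    fun k hk => by simp [negPart_eq_zero.2 hk], ?_⟩
  rw [hD.outerSum_sqrt_smul_eigenvectorBasis _ fun k => by positivity,
    hD.outerSum_sqrt_smul_eigenvectorBasis _ fun k => by positivity, ← map_sub, diagonal_sub]
  calc _ = Unitary.conjStarAlgAut ℂ _ hD.eigenvectorUnitary
        (((‖D‖⁻¹ : ℝ) : ℂ) • diagonal (RCLike.ofReal ∘ ev)) := by
        rw [← diagonal_smul]
        congr 2 with k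
        rw [← Complex.ofReal_sub, ← sub_div, posPart_sub_negPart]
        simp [div_eq_inv_mul]
    _ = ‖D‖⁻¹ • D := by
        rw [map_smul, ← hD.spectral_theorem, Complex.coe_smul]

/-- Compressed to the span of the negative eigenvectors of `D`, `X` becomes positive definite. -/
theorem card_eigenvalues_neg_le_rank {X : Matrix m m ℂ} (hDX : (D + X).PosSemidef) :
    (Finset.univ.filter fun k => hD.eigenvalues k < 0).card ≤ X.rank := by
  set S := Finset.univ.filter fun k => hD.eigenvalues k < 0
  set U : Matrix m m ℂ := (hD.eigenvectorUnitary : Matrix m m ℂ)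
  let B : Matrix m S ℂ := U.submatrix id Subtype.val
  have hBDB : Bᴴ * D * B = diagonal fun k : S => (hD.eigenvalues k : ℂ) := by
    have h := hD.conjStarAlgAut_star_eigenvectorUnitary
    rw [Unitary.conjStarAlgAut_star_apply] at h
    calc Bᴴ * D * B = (star U * D * U).submatrix Subtype.val Subtype.val := by
          simp [B, star_eq_conjTranspose, conjTranspose_submatrix,
            submatrix_mul _ _ _ _ _ Function.bijective_id]
      _ = _ := by rw [h, submatrix_diagonal _ _ Subtype.val_injective]; rfl
  have hBXB : (Bᴴ * X * B).PosDef := by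
    have hneg : (-(Bᴴ * D * B)).PosDef := by
      rw [hBDB, diagonal_neg]
      refine PosDef.diagonal fun k => ?_
      have : hD.eigenvalues k < 0 := (Finset.mem_filter.1 k.2).2
      simpa [← Complex.ofReal_neg, Complex.zero_lt_real] using this
    convert PosDef.posSemidef_add (hDX.conjTranspose_mul_mul_same B) hneg using 1
    simp only [Matrix.mul_add, Matrix.add_mul]
    abel
  calc S.card = Fintype.card S := (Fintype.card_coe S).symm
    _ = (Bᴴ * X * B).rank := (rank_of_isUnit _ hBXB.isUnit).symm
    _ ≤ X.rank := (rank_mul_le_left _ _).trans (rank_mul_le_right _ _)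

end IsHermitian

theorem exists_outerSum_sub_eq_inv_norm_smul_sub [Fintype m] [DecidableEq m] {r : ℕ}
    {X Y : Matrix m m ℂ} (hX : X.IsHermitian) (hr : X.rank ≤ r) (hY : Y.PosSemidef) :
    ∃ (w : m → EuclideanSpace ℂ m) (v : Fin r → EuclideanSpace ℂ m),
      ‖(w, v)‖ ≤ 1 ∧ outerSum w - outerSum v = ‖Y - X‖⁻¹ • (Y - X) := by
  have hD : (Y - X).IsHermitian := hY.isHermitian.sub hX
  obtain ⟨w, v, hw, hv, hv0, hwv⟩ := hD.exists_outerSum_sub_eq_inv_norm_smul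
  have hneg := hD.card_eigenvalues_neg_le_rank (X := X) (by simpa using hY)
  obtain ⟨v', hv', hvv'⟩ := exists_outerSum_eq (κ := Fin r) v
    (Finset.univ.filter fun k => hD.eigenvalues k < 0)
    (fun k hk => hv0 k (by simpa using hk)) (by simpa using hneg.trans hr)
  exact ⟨w, v', max_le hw (hv'.trans hv), hvv' ▸ hwv⟩

end Matrix

theorem rComplete.exists_pos_mul_norm_sub_le {n m r : ℕ}
    {M : Matrix (Fin n) (Fin n) ℂ →ₗ[ℝ] EuclideanSpace ℝ (Fin m)} (hM : rComplete M r) :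
    ∃ c > 0, ∀ X Y : Matrix (Fin n) (Fin n) ℂ, X.IsHermitian → X.rank ≤ r → Y.PosSemidef →
      c * ‖Y - X‖ ≤ ‖M (Y - X)‖ := by
  let f (p : (Fin n → EuclideanSpace ℂ (Fin n)) × (Fin r → EuclideanSpace ℂ (Fin n))) :=
    outerSum p.1 - outerSum p.2
  have hf : Continuous f := (continuous_outerSum.comp continuous_fst).sub
    (continuous_outerSum.comp continuous_snd)
  set K := Metric.closedBall 0 1 ∩ {p | ‖f p‖ = 1}
  have hK : IsCompact K :=
    (isCompact_closedBall _ _).inter_right (isClosed_eq hf.norm continuous_const)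
  have hMK : ∀ p ∈ K, 0 < ‖M (f p)‖ := by
    rintro ⟨w, v⟩ ⟨-, hwv⟩
    rw [norm_pos_iff, map_sub, sub_ne_zero]
    refine (hM _ _ (posSemidef_outerSum v) ((rank_outerSum_le v).trans (by simp))
      (posSemidef_outerSum w) fun h => ?_).symm
    simp [f, h] at hwv
  obtain ⟨c, hc, hcK⟩ : ∃ c > 0, ∀ p ∈ K, c ≤ ‖M (f p)‖ :=
    hK.exists_forall_le' (M.continuous_of_finiteDimensional.comp hf).norm.continuousOn hMK
  refine ⟨c, hc, fun X Y hX hr hY => ?_⟩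
  rcases eq_or_ne (Y - X) 0 with h | h
  · simp [h]
  obtain ⟨w, v, hwv, heq⟩ := exists_outerSum_sub_eq_inv_norm_smul_sub hX hr hY
  have hpos : 0 < ‖Y - X‖ := norm_pos_iff.2 h
  have := hcK (w, v) ⟨mem_closedBall_zero_iff.2 hwv, by simp [f, heq, norm_smul, hpos.ne']⟩
  rwa [show f (w, v) = _ from heq, map_smul, norm_smul, norm_inv, norm_norm,
    le_inv_mul_iff₀ hpos, mul_comm] at this

/-- if `M` is `r`-complete then there is `C > 0` such that for all `ε > 0`,
all `X_r ∈ S_r^n`, all Hermitian `E` with `‖M(E)‖₂ ≤ ε`, and all PSD `Y` with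
`‖M(Y) − M(X_r + E)‖₂ ≤ ε`, one has `‖Y − X_r‖₂ ≤ C·ε`. -/
theorem stmt9 {n m r : ℕ}
    (M : Matrix (Fin n) (Fin n) ℂ →ₗ[ℝ] EuclideanSpace ℝ (Fin m))
    (hM : rComplete M r) :
    ∃ C > (0 : ℝ), ∀ ε > (0 : ℝ),
      ∀ Xr : Matrix (Fin n) (Fin n) ℂ, Xr.PosSemidef → Xr.rank ≤ r →
      ∀ E : Matrix (Fin n) (Fin n) ℂ, E.IsHermitian → ‖M E‖ ≤ ε →
      ∀ Y : Matrix (Fin n) (Fin n) ℂ, Y.PosSemidef → ‖M Y - M (Xr + E)‖ ≤ ε →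
        frobNorm (Y - Xr) ≤ C * ε := by
  obtain ⟨c, hc, hcM⟩ := hM.exists_pos_mul_norm_sub_le
  refine ⟨2 / c, by positivity, fun ε _ Xr hXr hr E _ hME Y hY hMY => ?_⟩
  have hMD : ‖M (Y - Xr)‖ ≤ 2 * ε := calc
    ‖M (Y - Xr)‖ = ‖(M Y - M (Xr + E)) + M E‖ := by rw [map_sub, map_add]; abel_nf
    _ ≤ ε + ε := norm_add_le_of_le hMY hME
    _ = 2 * ε := by ring
  rw [frobNorm_eq_norm, div_mul_eq_mul_div, le_div_iff₀ hc]
  linarith [hcM Xr Y hXr.isHermitian hr hY]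
end
end

section
/- Let r ≥ 0 and let A be a Hermitian matrix of size 2(r+1) × 2(r+1), with rows and columns indexed by 0,…,2r+1, such that A_{jl} = 0 whenever j + l < 2r+1, A_{jj} = 0 for all j, and A_{j,(2r+1)−j} ≠ 0 for all j (i.e., A vanishes strictly above its main anti-diagonal and on its diagonal, and every entry of the main anti-diagonal is nonzero). Then A has at least r+1 positive eigenvalues and at least r+1 negative eigenvalues (counted with multiplicity); in particular it has exactly r+1 of each. -/
/-!
Reversing the order of the rows makes `A` upper triangular with the nonzero anti-diagonal on
the diagonal, so `A` is invertible and has no zero eigenvalue. The quadratic form of `A`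
vanishes on the `r + 1`-dimensional span of the first `r + 1` coordinate vectors, while it is
positive (negative) definite on the span of the eigenvectors with positive (negative)
eigenvalues. These spans meet trivially, so there are at most `r + 1` positive and at most
`r + 1` negative eigenvalues, and as they account for all `2 (r + 1)` eigenvalues, exactly
`r + 1` of each.
-/

namespace Matrix

variable {n : Type*} [Fintype n]

theorem dotProduct_mulVec_eq_zero_of_vanishing_block {R : Type*} [NonUnitalNonAssocSemiring R]
    {A : Matrix n n R} {T : Finset n} (hA : ∀ j ∈ T, ∀ l ∈ T, A j l = 0) {x y : n → R}
    (hx : ∀ j ∉ T, x j = 0) (hy : ∀ l ∉ T, y l = 0) : x ⬝ᵥ (A *ᵥ y) = 0 := by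
  refine Finset.sum_eq_zero fun j _ => ?_
  by_cases hj : j ∈ T
  · suffices (A *ᵥ y) j = 0 by rw [this, mul_zero]
    refine Finset.sum_eq_zero fun l _ => ?_
    by_cases hl : l ∈ T
    · simp only [hA j hj l hl, zero_mul]
    · rw [hy l hl, mul_zero]
  · rw [hx j hj, zero_mul]

theorem det_ne_zero_of_eq_zero_above_antidiagonal {R : Type*} [CommRing R] [IsDomain R] {m : ℕ}
    {A : Matrix (Fin m) (Fin m) R} (hzero : ∀ i j : Fin m, (i : ℕ) + j + 1 < m → A i j = 0)
    (hanti : ∀ i, A i i.rev ≠ 0) : A.det ≠ 0 := by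
  have htri : (A.submatrix Fin.revPerm id).IsUpperTriangular := by
    intro i j hij
    apply hzero
    simp only [Fin.revPerm_apply, Fin.val_rev, id_eq] at hij ⊢
    omega
  have hdet : (A.submatrix Fin.revPerm id).det ≠ 0 := by
    rw [det_of_isUpperTriangular htri, Finset.prod_ne_zero_iff]
    intro i _
    simpa using hanti i.rev
  rw [det_permute] at hdet
  exact right_ne_zero_of_mul hdet

variable [DecidableEq n]

theorem exists_ne_zero_forall_notMem_eq_zero {K : Type*} [Field K] (U : Matrix n n K)
    {S T : Finset n} (h : Fintype.card n < S.card + T.card) :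
    ∃ y ≠ 0, (∀ i ∉ S, y i = 0) ∧ ∀ j ∉ T, (U *ᵥ y) j = 0 := by
  let f : (n → K) →ₗ[K] ({i // i ∉ S} → K) × ({j // j ∉ T} → K) :=
    (LinearMap.funLeft K K Subtype.val).prod (LinearMap.funLeft K K Subtype.val ∘ₗ U.mulVecLin)
  have hker : LinearMap.ker f ≠ ⊥ := by
    apply LinearMap.ker_ne_bot_of_finrank_lt
    simp only [Module.finrank_prod, Module.finrank_fintype_fun_eq_card,
      Fintype.card_subtype_compl, Fintype.card_coe]
    have := S.card_le_univ
    have := T.card_le_univ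
    omega
  obtain ⟨y, hy, hy0⟩ := Submodule.exists_mem_ne_zero_of_ne_bot hker
  rw [LinearMap.mem_ker] at hy
  exact ⟨y, hy0, fun i hi => congrFun (congrArg Prod.fst hy) ⟨i, hi⟩,
    fun j hj => congrFun (congrArg Prod.snd hy) ⟨j, hj⟩⟩

variable {𝕜 : Type*} [RCLike 𝕜]

theorem IsHermitian.star_dotProduct_mulVec_eigenvectorUnitary_mulVec {A : Matrix n n 𝕜}
    (hA : A.IsHermitian) (y : n → 𝕜) :
    star ((hA.eigenvectorUnitary : Matrix n n 𝕜) *ᵥ y) ⬝ᵥ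
      (A *ᵥ ((hA.eigenvectorUnitary : Matrix n n 𝕜) *ᵥ y)) =
      ((∑ i, hA.eigenvalues i * ‖y i‖ ^ 2 : ℝ) : 𝕜) := by
  set U : Matrix n n 𝕜 := ↑hA.eigenvectorUnitary
  have hUU : star U * U = 1 := Unitary.coe_star_mul_self hA.eigenvectorUnitary
  have hAU : A * U = U * diagonal (RCLike.ofReal ∘ hA.eigenvalues) := by
    conv_lhs => rw [hA.spectral_theorem, Unitary.conjStarAlgAut_apply]
    rw [mul_assoc, hUU, mul_one]
  rw [mulVec_mulVec, hAU, ← mulVec_mulVec, star_mulVec, ← dotProduct_mulVec, mulVec_mulVec,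
    ← star_eq_conjTranspose, hUU, one_mulVec]
  push_cast
  refine Finset.sum_congr rfl fun i _ => ?_
  simp only [mulVec_diagonal, Pi.star_apply, Function.comp_apply, RCLike.star_def]
  rw [mul_left_comm, RCLike.conj_mul]

theorem IsHermitian.card_add_card_le_of_vanishing_block {A : Matrix n n 𝕜} (hA : A.IsHermitian)
    {T : Finset n} (hT : ∀ j ∈ T, ∀ l ∈ T, A j l = 0) {S : Finset n} {ε : ℝ}
    (hS : ∀ i ∈ S, 0 < ε * hA.eigenvalues i) : S.card + T.card ≤ Fintype.card n := by
  by_contra! h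
  obtain ⟨y, hy0, hyS, hyT⟩ :=
    exists_ne_zero_forall_notMem_eq_zero (hA.eigenvectorUnitary : Matrix n n 𝕜) h
  have hform := hA.star_dotProduct_mulVec_eigenvectorUnitary_mulVec y
  rw [dotProduct_mulVec_eq_zero_of_vanishing_block hT (fun j hj => by simp [hyT j hj]) hyT,
    eq_comm, RCLike.ofReal_eq_zero] at hform
  have hsum : ∑ i ∈ S, ε * hA.eigenvalues i * ‖y i‖ ^ 2 = 0 := by
    rw [Finset.sum_subset S.subset_univ fun i _ hi => by simp [hyS i hi]]
    simp [mul_assoc, ← Finset.mul_sum, hform]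
  rw [Finset.sum_eq_zero_iff_of_nonneg fun i hi => by have := hS i hi; positivity] at hsum
  refine hy0 (funext fun i => if hi : i ∈ S then ?_ else hyS i hi)
  simpa [(hS i hi).ne'] using hsum i hi

end Matrix

theorem Finset.card_filter_pos_add_card_filter_neg {ι : Type*} [Fintype ι] {f : ι → ℝ}
    (hf : ∀ i, f i ≠ 0) :
    (univ.filter fun i => 0 < f i).card + (univ.filter fun i => f i < 0).card =
      Fintype.card ι := by
  rw [← card_univ, ← card_filter_add_card_filter_not (s := univ) (fun i => 0 < f i)]
  congr 2
  exact filter_congr fun i _ => by grind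

/-- a Hermitian `2(r+1) × 2(r+1)` matrix vanishing strictly above its main
anti-diagonal and on its diagonal, with nonzero main anti-diagonal, has at least `r+1`
positive and at least `r+1` negative eigenvalues; in particular exactly `r+1` of each. -/
theorem stmt14 {r : ℕ} (A : Matrix (Fin (2 * (r + 1))) (Fin (2 * (r + 1))) ℂ)
    (hA : A.IsHermitian)
    (hupper : ∀ j l : Fin (2 * (r + 1)), (j : ℕ) + (l : ℕ) < 2 * r + 1 → A j l = 0)
    (hanti : ∀ j : Fin (2 * (r + 1)), A j ⟨2 * r + 1 - (j : ℕ), by omega⟩ ≠ 0) :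
    r + 1 ≤ (Finset.univ.filter fun i => 0 < hA.eigenvalues i).card ∧
    r + 1 ≤ (Finset.univ.filter fun i => hA.eigenvalues i < 0).card ∧
    (Finset.univ.filter fun i => 0 < hA.eigenvalues i).card = r + 1 ∧
    (Finset.univ.filter fun i => hA.eigenvalues i < 0).card = r + 1 := by
  have hdet : A.det ≠ 0 := Matrix.det_ne_zero_of_eq_zero_above_antidiagonal
    (fun i j h => hupper i j (by omega))
    (fun i => by convert hanti i using 2; ext; simp only [Fin.val_rev]; omega)
  have hev : ∀ i, hA.eigenvalues i ≠ 0 := by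
    rw [hA.det_eq_prod_eigenvalues, Finset.prod_ne_zero_iff] at hdet
    exact fun i => by simpa using hdet i (Finset.mem_univ i)
  let T : Finset (Fin (2 * (r + 1))) := Finset.univ.filter fun j => (j : ℕ) < r + 1
  have hTcard : T.card = r + 1 := by rw [Fin.card_filter_val_lt]; omega
  have hT : ∀ j ∈ T, ∀ l ∈ T, A j l = 0 := fun j hj l hl => by
    simp only [T, Finset.mem_filter] at hj hl
    exact hupper j l (by omega)
  have hpos := hA.card_add_card_le_of_vanishing_block hT (ε := 1)
    (S := Finset.univ.filter fun i => 0 < hA.eigenvalues i) (by simp)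
  have hneg := hA.card_add_card_le_of_vanishing_block hT (ε := -1)
    (S := Finset.univ.filter fun i => hA.eigenvalues i < 0) (by simp)
  have hsplit := Finset.card_filter_pos_add_card_filter_neg hev
  simp only [Fintype.card_fin] at hpos hneg hsplit
  omega
end

section
/- Let 1 ≤ q ≤ n and let B be a real n×q matrix that is totally non-singular. Then every nonzero vector in the column span of B has at least n − q + 1 nonzero entries; equivalently, for every c ∈ ℝ^q with Bc ≠ 0, the vector Bc has at most q − 1 zero entries. -/
open Matrix

noncomputable section

/-- for a totally non-singular real `n×q` matrix `B` (`1 ≤ q ≤ n`), every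
nonzero vector in the column span of `B` has at least `n − q + 1` nonzero entries;
equivalently at most `q − 1` zero entries. -/
theorem stmt15 {n q : ℕ} (hq1 : 1 ≤ q) (hqn : q ≤ n)
    (B : Matrix (Fin n) (Fin q) ℝ) (hB : TotallyNonSingular B) :
    ∀ c : Fin q → ℝ, B.mulVec c ≠ 0 →
      n - q + 1 ≤ (Finset.univ.filter fun i => B.mulVec c i ≠ 0).card ∧
      (Finset.univ.filter fun i => B.mulVec c i = 0).card ≤ q - 1 := by
  intro c hc
  set Z := Finset.univ.filter fun i => B.mulVec c i = 0 with hZ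
  have hcard : Z.card ≤ q - 1 := by
    by_contra h
    push_neg at h
    have hq' : q ≤ Z.card := by omega
    obtain ⟨t, hts, htcard⟩ := Finset.exists_subset_card_eq hq'
    let e := t.orderIsoOfFin htcard
    have hf : StrictMono (fun i => (e i : Fin n)) :=
      fun a b hab => e.strictMono hab
    have hdet := hB q (fun i => (e i : Fin n)) id hf strictMono_id
    have hmv : (B.submatrix (fun i => (e i : Fin n)) id).mulVec c = 0 := by
      funext i
      have hmem : (e i : Fin n) ∈ Z := hts (e i).2
      simp only [hZ, Finset.mem_filter] at hmem
      simpa [Matrix.mulVec, Matrix.submatrix] using hmem.2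
    have : c = 0 := Matrix.eq_zero_of_mulVec_eq_zero hdet hmv
    exact hc (by simp [this])
  refine ⟨?_, hcard⟩
  have hsum := Finset.card_filter_add_card_filter_not
    (s := (Finset.univ : Finset (Fin n))) (p := fun i => B.mulVec c i = 0)
  simp only [Finset.card_univ, Fintype.card_fin, ne_eq] at hsum ⊢
  have hZc : Z.card = (Finset.filter (fun i => B.mulVec c i = 0) Finset.univ).card := rfl
  omega
end
end

section
/- Let x, x̂ ∈ ℂⁿ with x ≠ 0. Then there exists φ ∈ [0, 2π) such that ‖x − e^{iφ}x̂‖₂ · ‖x‖₂ ≤ √2 · ‖xx* − x̂x̂*‖₂, where xx* and x̂x̂* are the rank-one Hermitian matrices formed from x and x̂, and the matrix norm is the Frobenius norm. -/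
/-
Align the phase: for `s = ⟪x̂, x⟫` and `e = exp (i arg s)` one has `‖x - e x̂‖² = ‖x‖² + ‖x̂‖² - 2|s|`,
while `‖xx* - x̂x̂*‖₂² = ‖x‖⁴ + ‖x̂‖⁴ - 2|s|²`. With `a = ‖x‖`, `b = ‖x̂‖` and `c = |s| ≤ ab`
(Cauchy–Schwarz) the claim becomes `(a² + b² - 2c) a² ≤ 2 (a⁴ + b⁴ - 2c²)`. The defect is concave
in `c`, nonnegative at `c = 0`, and equals `(a - b)² (a² + 4ab + 2b²)` at `c = ab`.
-/

open Matrix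

noncomputable section

/-- The Euclidean norm `‖x‖₂` of a vector in `ℂⁿ`. -/
def vecNorm {n : ℕ} (x : Fin n → ℂ) : ℝ :=
  Real.sqrt (∑ i, Complex.normSq (x i))

open Complex ComplexConjugate

lemma exists_mem_Ico_exp_mul_I_eq (θ : ℝ) :
    ∃ φ ∈ Set.Ico (0 : ℝ) (2 * Real.pi), exp (φ * I) = exp (θ * I) := by
  refine ⟨toIcoMod Real.two_pi_pos 0 θ, toIcoMod_mem_Ico' _ θ, ?_⟩
  rw [← self_sub_toIcoDiv_zsmul, zsmul_eq_mul]
  push_cast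
  exact exp_mul_I_periodic.sub_int_mul_eq _

lemma sq_add_sq_sub_mul_sq_le_of_le_mul (u v c : ℝ) (hc : 0 ≤ c) (hcuv : c ≤ u * v) :
    (u ^ 2 + v ^ 2 - 2 * c) * u ^ 2 ≤ 2 * (u ^ 4 + v ^ 4 - 2 * c ^ 2) := by
  nlinarith [mul_nonneg hc (sub_nonneg.2 hcuv), mul_nonneg (hc.trans hcuv) (sq_nonneg (u - v))]

section InnerProductSpace

variable {E : Type*} [NormedAddCommGroup E] [InnerProductSpace ℂ E]

lemma norm_sub_exp_arg_inner_smul_sq (u v : E) :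
    ‖u - exp (arg (inner ℂ v u) * I) • v‖ ^ 2 = ‖u‖ ^ 2 + ‖v‖ ^ 2 - 2 * ‖inner ℂ v u‖ := by
  set s := inner ℂ v u
  have hphase : exp (arg s * I) * conj s = ‖s‖ := by
    calc exp (arg s * I) * conj s
        = exp (arg s * I) * conj (‖s‖ * exp (arg s * I)) := by
          rw [norm_mul_exp_arg_mul_I]
      _ = ‖s‖ * (exp (arg s * I) * conj (exp (arg s * I))) := by
          rw [map_mul, conj_ofReal]; ring
      _ = ‖s‖ := by
          rw [mul_conj, normSq_eq_norm_sq, norm_exp_ofReal_mul_I, one_pow, ofReal_one, mul_one]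
  rw [norm_sub_sq (𝕜 := ℂ), inner_smul_right, ← inner_conj_symm, hphase, norm_smul,
    norm_exp_ofReal_mul_I, one_mul, RCLike.re_to_complex, ofReal_re]
  ring

lemma norm_sub_exp_arg_inner_smul_mul_norm_sq_le (u v : E) :
    (‖u - exp (arg (inner ℂ v u) * I) • v‖ * ‖u‖) ^ 2 ≤
      2 * (‖u‖ ^ 4 + ‖v‖ ^ 4 - 2 * ‖inner ℂ v u‖ ^ 2) := by
  rw [mul_pow, norm_sub_exp_arg_inner_smul_sq]
  have h := sq_add_sq_sub_mul_sq_le_of_le_mul ‖u‖ ‖v‖ ‖inner ℂ v u‖ (norm_nonneg _)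
    ((norm_inner_le_norm v u).trans_eq (mul_comm _ _))
  linarith

end InnerProductSpace

lemma vecNorm_eq_norm_toLp {n : ℕ} (x : Fin n → ℂ) : vecNorm x = ‖WithLp.toLp 2 x‖ := by
  simp only [vecNorm, EuclideanSpace.norm_eq, Complex.sq_norm]

lemma sum_normSq_eq_norm_toLp_sq {n : ℕ} (x : Fin n → ℂ) :
    ∑ i, normSq (x i) = ‖WithLp.toLp 2 x‖ ^ 2 := by
  simp only [EuclideanSpace.norm_sq_eq, Complex.sq_norm]

lemma frobNorm_vecMulVec_sub_sq {n : ℕ} (x y : Fin n → ℂ) :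
    frobNorm (vecMulVec x (star x) - vecMulVec y (star y)) ^ 2 =
      ‖WithLp.toLp 2 x‖ ^ 4 + ‖WithLp.toLp 2 y‖ ^ 4
        - 2 * ‖inner ℂ (WithLp.toLp 2 y) (WithLp.toLp 2 x)‖ ^ 2 := by
  -- The cross term is split as `normSq s + normSq (conj s)` so that, after expanding both
  -- sides into double sums, the two halves match the two cross terms of the left side.
  have hsum : ∑ i, ∑ j, normSq (x i * conj (x j) - y i * conj (y j)) =
      (∑ i, normSq (x i)) ^ 2 + (∑ i, normSq (y i)) ^ 2
        - normSq (x ⬝ᵥ star y) - normSq (star (x ⬝ᵥ star y)) := by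
    apply ofReal_injective
    push_cast
    simp only [← mul_conj, dotProduct, map_sum, map_sub, map_mul, conj_conj, Pi.star_apply,
      RCLike.star_def, sq, Finset.sum_mul_sum]
    simp only [← Finset.sum_add_distrib, ← Finset.sum_sub_distrib]
    refine Finset.sum_congr rfl fun i _ => Finset.sum_congr rfl fun j _ => ?_
    ring
  simp only [frobNorm, Matrix.sub_apply, vecMulVec_apply, Pi.star_apply, RCLike.star_def]
  rw [Real.sq_sqrt (Finset.sum_nonneg fun _ _ => Finset.sum_nonneg fun _ _ => normSq_nonneg _),
    hsum, sum_normSq_eq_norm_toLp_sq, sum_normSq_eq_norm_toLp_sq, EuclideanSpace.inner_toLp_toLp,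
    RCLike.star_def, normSq_conj, normSq_eq_norm_sq]
  ring

theorem stmt16_general {n : ℕ} (x xhat : Fin n → ℂ) :
    ∃ φ ∈ Set.Ico (0 : ℝ) (2 * Real.pi),
      vecNorm (x - Complex.exp (φ * Complex.I) • xhat) * vecNorm x ≤
        Real.sqrt 2 * frobNorm (vecMulVec x (star x) - vecMulVec xhat (star xhat)) := by
  obtain ⟨φ, hφ, hexp⟩ := exists_mem_Ico_exp_mul_I_eq
    (arg (inner ℂ (WithLp.toLp 2 xhat) (WithLp.toLp 2 x)))
  refine ⟨φ, hφ, ?_⟩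
  rw [hexp, vecNorm_eq_norm_toLp, vecNorm_eq_norm_toLp, WithLp.toLp_sub, WithLp.toLp_smul]
  refine le_of_sq_le_sq ?_ (mul_nonneg (Real.sqrt_nonneg 2) (Real.sqrt_nonneg _))
  rw [mul_pow √2, frobNorm_vecMulVec_sub_sq, Real.sq_sqrt zero_le_two]
  exact norm_sub_exp_arg_inner_smul_mul_norm_sq_le _ _

/-- for `x, x̂ ∈ ℂⁿ` with `x ≠ 0` there is `φ ∈ [0,2π)` with
`‖x − e^{iφ}x̂‖₂ · ‖x‖₂ ≤ √2 · ‖xx* − x̂x̂*‖₂`. -/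
theorem stmt16 {n : ℕ} (x xhat : Fin n → ℂ) (hx : x ≠ 0) :
    ∃ φ ∈ Set.Ico (0 : ℝ) (2 * Real.pi),
      vecNorm (x - Complex.exp (φ * Complex.I) • xhat) * vecNorm x ≤
        Real.sqrt 2 * frobNorm (vecMulVec x (star x) - vecMulVec xhat (star xhat)) :=
  stmt16_general x xhat
end
end
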